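/- arXiv:2307.13653 — 3 statements merged into one kernel-verified Lean document; each statement's English description precedes it below -/
import Mathlib

section
/- The Poisson-type kernel identity: for a > 0, ∬_{ℝ²} exp(-a‖k‖) e^{i(k₁x + k₂y)} dk₁ dk₂ = 2π a / (a² + x² + y²)^{3/2}. -/
/-!
In polar coordinates `k = ρ (cos θ, sin θ)` the radial integral is elementary:
`∫₀^∞ ρ e^{-(a - i c) ρ} dρ = (a - i c)⁻²` with `c = x cos θ + y sin θ`. For the angular integral,
put `s = √(a² + x² + y²)` and `β = (y + i x) / (a + s)`, so that `‖β‖ < 1` and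
`a - i c = (a + s) / 2 · (1 - β e^{iθ}) (1 + β̄ e^{-iθ})`. With `z = e^{iθ}` the angular integral
becomes a contour integral over the unit circle with a single double pole inside, at `z = -β̄`,
which Cauchy's formula for the derivative evaluates to `2π a / s³`.
-/

open MeasureTheory Real Filter Topology Set Metric
open Complex (I I_ne_zero I_sq)
open scoped Complex ComplexConjugate

theorem integrableOn_mul_exp_neg_mul {b : ℝ} (hb : 0 < b) :
    IntegrableOn (fun ρ : ℝ => ρ * rexp (-b * ρ)) (Ioi 0) := by
  simpa using integrableOn_rpow_mul_exp_neg_mul_rpow (s := 1) (p := 1) (by norm_num) one_pos hb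

theorem norm_cexp_neg_mul_ofReal (z : ℂ) (ρ : ℝ) : ‖cexp (-z * ρ)‖ = rexp (-z.re * ρ) := by
  simp [Complex.norm_exp]

theorem integral_Ioi_mul_cexp_neg_mul {z : ℂ} (hz : 0 < z.re) :
    ∫ ρ : ℝ in Ioi 0, (ρ : ℂ) * cexp (-z * ρ) = (z ^ 2)⁻¹ := by
  have hz0 : z ≠ 0 := by contrapose! hz; rw [hz, Complex.zero_re]
  have hF : ∀ w : ℂ, HasDerivAt (fun w => -(w / z + (z ^ 2)⁻¹) * cexp (-z * w))
      (w * cexp (-z * w)) w := by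
    intro w
    have h1 : HasDerivAt (fun w => -(w / z + (z ^ 2)⁻¹)) (-(1 / z)) w :=
      (((hasDerivAt_id' w).div_const z).add_const _).neg
    have h2 : HasDerivAt (fun w => cexp (-z * w)) (cexp (-z * w) * (-z * 1)) w :=
      ((hasDerivAt_id' w).const_mul (-z)).cexp
    refine (h1.mul h2).congr_deriv ?_
    field_simp
    ring
  have hnorm : ∀ ρ : ℝ, 0 ≤ ρ → ‖(ρ : ℂ) * cexp (-z * ρ)‖ = ρ * rexp (-z.re * ρ) := fun ρ hρ => by
    rw [norm_mul, norm_cexp_neg_mul_ofReal, Complex.norm_real, Real.norm_of_nonneg hρ]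
  have hint : IntegrableOn (fun ρ : ℝ => (ρ : ℂ) * cexp (-z * ρ)) (Ioi 0) := by
    refine (integrableOn_mul_exp_neg_mul hz).mono' (by fun_prop) ?_
    filter_upwards [ae_restrict_mem measurableSet_Ioi] with ρ hρ
    exact (hnorm ρ hρ.le).le
  have hlim : Tendsto (fun ρ : ℝ => -((ρ : ℂ) / z + (z ^ 2)⁻¹) * cexp (-z * ρ)) atTop (𝓝 0) := by
    have h1 : Tendsto (fun ρ : ℝ => (ρ : ℂ) * cexp (-z * ρ)) atTop (𝓝 0) := by
      rw [tendsto_zero_iff_norm_tendsto_zero]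
      refine (tendsto_rpow_mul_exp_neg_mul_atTop_nhds_zero 1 _ hz).congr' ?_
      filter_upwards [eventually_ge_atTop 0] with ρ hρ
      rw [hnorm ρ hρ, Real.rpow_one]
    have h2 : Tendsto (fun ρ : ℝ => cexp (-z * ρ)) atTop (𝓝 0) := by
      rw [tendsto_zero_iff_norm_tendsto_zero]
      simp_rw [norm_cexp_neg_mul_ofReal]
      exact tendsto_exp_atBot.comp (tendsto_id.const_mul_atTop_of_neg (neg_lt_zero.2 hz))
    convert (h1.const_mul (-z⁻¹)).sub (h2.const_mul (z ^ 2)⁻¹) using 1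
    · ext ρ; ring
    · simp
  convert integral_Ioi_of_hasDerivAt_of_tendsto' (fun ρ _ => (hF ρ).comp_ofReal) hint hlim using 1
  simp

theorem integral_eq_intervalIntegral_integral_polar {E : Type*} [NormedAddCommGroup E]
    [NormedSpace ℝ E] {f : ℝ × ℝ → E} (hf : Continuous f) {g : ℝ → ℝ}
    (hg : IntegrableOn (fun ρ => ρ * g ρ) (Ioi 0))
    (hfg : ∀ k : ℝ × ℝ, ‖f k‖ ≤ g √(k.1 ^ 2 + k.2 ^ 2)) :
    ∫ k, f k = ∫ θ in -π..π, ∫ ρ in Ioi 0, ρ • f (ρ * cos θ, ρ * sin θ) := by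
  have hint : Integrable (fun p : ℝ × ℝ => p.1 • f (p.1 * cos p.2, p.1 * sin p.2))
      ((volume.restrict (Ioi 0)).prod (volume.restrict (Ioo (-π) π))) := by
    refine (hg.mul_prod (integrableOn_const (C := (1 : ℝ)) measure_Ioo_lt_top.ne)).mono'
      (by fun_prop) ?_
    rw [Measure.prod_restrict]
    filter_upwards [ae_restrict_mem (measurableSet_Ioi.prod measurableSet_Ioo)] with p hp
    have hρ : √((p.1 * cos p.2) ^ 2 + (p.1 * sin p.2) ^ 2) = p.1 := by
      rw [mul_pow, mul_pow, ← mul_add, cos_sq_add_sin_sq, mul_one, sqrt_sq hp.1.le]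
    have hfp := hfg (p.1 * cos p.2, p.1 * sin p.2)
    rw [hρ] at hfp
    rw [norm_smul, norm_of_nonneg hp.1.le, mul_one]
    exact mul_le_mul_of_nonneg_left hfp hp.1.le
  rw [← integral_comp_polarCoord_symm, polarCoord_target, Measure.volume_eq_prod,
    ← Measure.prod_restrict, intervalIntegral.integral_of_le (by linarith [pi_pos]),
    integral_Ioc_eq_integral_Ioo]
  exact integral_prod_symm _ hint

theorem intervalIntegral_cexp_mul_I_eq_circleIntegral {E : Type*} [NormedAddCommGroup E]
    [NormedSpace ℂ E] (G : ℂ → E) :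
    ∫ θ in -π..π, G (cexp (θ * I)) = ∮ z in C(0, 1), (z * I)⁻¹ • G z := by
  have hper : Function.Periodic (fun θ : ℝ => G (cexp (θ * I))) (2 * π) := fun θ => by
    simpa [circleMap_zero] using congrArg G (periodic_circleMap 0 1 θ)
  have hshift := hper.intervalIntegral_add_eq (-π) 0
  rw [show -π + 2 * π = π by ring, zero_add] at hshift
  rw [hshift, circleIntegral]
  refine intervalIntegral.integral_congr fun θ _ => ?_
  rw [deriv_circleMap, circleMap_zero, Complex.ofReal_one, one_mul, smul_smul,
    mul_inv_cancel₀ (mul_ne_zero (Complex.exp_ne_zero _) I_ne_zero), one_smul]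

theorem integral_inv_sq_one_sub_mul_cexp {p q : ℂ} (hp : ‖p‖ < 1) (hq : ‖q‖ < 1) :
    ∫ θ in -π..π, (((1 - p * cexp (θ * I)) * (1 - q * cexp (-(θ * I)))) ^ 2)⁻¹ =
      2 * π * (1 + p * q) / (1 - p * q) ^ 3 := by
  set U : Set ℂ := {z | 1 - p * z ≠ 0}
  have hU : IsOpen U := isOpen_ne_fun (by fun_prop) continuous_const
  have hball : closedBall 0 1 ⊆ U := fun z hz => by
    have hpz : ‖p * z‖ < 1 := by
      rw [norm_mul]
      exact (mul_le_of_le_one_right (norm_nonneg p) (mem_closedBall_zero_iff.1 hz)).trans_lt hp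
    exact sub_ne_zero.2 fun h => hpz.ne (by rw [← h, norm_one])
  set f : ℂ → ℂ := fun z => -I * z / (1 - p * z) ^ 2
  have hf : DifferentiableOn ℂ f U :=
    DifferentiableOn.div (by fun_prop) (by fun_prop) fun z hz => pow_ne_zero 2 hz
  have hq' : q ∈ ball 0 1 := mem_ball_zero_iff.2 hq
  have hpq : 1 - p * q ≠ 0 := hball (ball_subset_closedBall hq')
  have hderiv : HasDerivAt f (-I * (1 + p * q) / (1 - p * q) ^ 3) q := by
    have h1 : HasDerivAt (fun z => -I * z) (-I * 1) q := (hasDerivAt_id' q).const_mul _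
    have h2 : HasDerivAt (fun z => (1 - p * z) ^ 2) (2 * (1 - p * q) ^ 1 * (-(p * 1))) q :=
      (((hasDerivAt_id' q).const_mul p).const_sub 1).pow 2
    refine (h1.div h2 (pow_ne_zero 2 hpq)).congr_deriv ?_
    field_simp
    ring
  -- With `z = exp (θ I)` the integral is `∮ ((z - q) ^ 2)⁻¹ • f z`, i.e. `2πi f'(q)` by Cauchy.
  have hcauchy := Complex.two_pi_I_inv_smul_circleIntegral_sub_sq_inv_smul_of_differentiable
    hU hball hf hq'
  simp_rw [Complex.exp_neg]
  rw [intervalIntegral_cexp_mul_I_eq_circleIntegral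
      (fun z => (((1 - p * z) * (1 - q * z⁻¹)) ^ 2)⁻¹),
    circleIntegral.integral_congr zero_le_one (g := fun z => ((z - q) ^ 2)⁻¹ • f z)]
  · rw [hderiv.deriv, inv_smul_eq_iff₀ (by simp [pi_ne_zero]), smul_eq_mul] at hcauchy
    rw [hcauchy]
    ring_nf
    rw [I_sq]
    ring
  · intro z hz
    have hz1 : ‖z‖ = 1 := mem_sphere_zero_iff_norm.1 hz
    have hz0 : z ≠ 0 := norm_ne_zero_iff.1 (by rw [hz1]; exact one_ne_zero)
    have hpz : 1 - p * z ≠ 0 := hball (sphere_subset_closedBall hz)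
    have hzq : z - q ≠ 0 := sub_ne_zero.2 fun h => hq.ne (h ▸ hz1)
    simp only [f, smul_eq_mul]
    field_simp
    ring_nf
    simp [I_sq]

theorem ofReal_sub_I_mul_cos_add_sin_eq {a s x y : ℝ} (hs : s ^ 2 = a ^ 2 + x ^ 2 + y ^ 2)
    (has : a + s ≠ 0) (θ : ℝ) :
    (a : ℂ) - I * ((x * cos θ + y * sin θ : ℝ) : ℂ) = (a + s) / 2 *
      ((1 - (y + x * I) / (a + s) * cexp (θ * I)) *
        (1 - (-(y - x * I) / (a + s)) * cexp (-(θ * I)))) := by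
  have has' : (a : ℂ) + s ≠ 0 := by exact_mod_cast has
  have hsC : (s : ℂ) ^ 2 = a ^ 2 + x ^ 2 + y ^ 2 := by exact_mod_cast hs
  rw [← neg_mul, ← Complex.ofReal_neg, Complex.exp_mul_I, Complex.exp_mul_I]
  push_cast [Complex.cos_neg, Complex.sin_neg]
  field_simp
  linear_combination -hsC + ((x : ℂ) ^ 2 + y ^ 2) * Complex.sin_sq_add_cos_sq (θ : ℂ) +
    ((I ^ 2 + 1) * x ^ 2 * Complex.sin θ ^ 2 - x ^ 2 * (Complex.cos θ ^ 2 + Complex.sin θ ^ 2)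
      - Complex.sin θ ^ 2 * (x ^ 2 + y ^ 2)) * I_sq

theorem integral_inv_sq_sub_I_mul_cos_add_sin {a : ℝ} (ha : 0 < a) (x y : ℝ) :
    ∫ θ in -π..π, (((a : ℂ) - I * ((x * cos θ + y * sin θ : ℝ) : ℂ)) ^ 2)⁻¹ =
      ((2 * π * a / √(a ^ 2 + x ^ 2 + y ^ 2) ^ 3 : ℝ) : ℂ) := by
  set s := √(a ^ 2 + x ^ 2 + y ^ 2)
  have hs : s ^ 2 = a ^ 2 + x ^ 2 + y ^ 2 := sq_sqrt (by positivity)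
  have hs0 : 0 < s := sqrt_pos.2 (by positivity)
  set β : ℂ := (y + x * I) / (a + s) with hβdef
  have hβ : ‖β‖ ^ 2 = (s - a) / (s + a) := by
    rw [norm_div, div_pow, ← Complex.normSq_eq_norm_sq, Complex.normSq_add_mul_I,
      ← Complex.ofReal_add, Complex.norm_real, norm_of_nonneg (by positivity)]
    field_simp
    linear_combination -(s + a) * hs
  have hβ1 : ‖β‖ < 1 := by
    refine (sq_lt_one_iff₀ (norm_nonneg β)).1 ?_
    rw [hβ, div_lt_one (by positivity)]
    linarith
  have hconj : conj β = (y - x * I) / (a + s) := by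
    simp [β, map_div₀, Complex.conj_ofReal]
    ring
  simp_rw [ofReal_sub_I_mul_cos_add_sin_eq hs (by positivity : a + s ≠ 0), ← hβdef, neg_div,
    ← hconj, mul_pow ((a + s : ℂ) / 2), mul_inv (((a + s : ℂ) / 2) ^ 2)]
  rw [intervalIntegral.integral_const_mul,
    integral_inv_sq_one_sub_mul_cexp hβ1 (by rwa [norm_neg, Complex.norm_conj]), mul_neg,
    Complex.mul_conj, Complex.normSq_eq_norm_sq, hβ]
  have has : s + a ≠ 0 := by positivity
  have hs0' : s ≠ 0 := hs0.ne'
  have h1 : 1 + -((s - a) / (s + a)) = 2 * a / (s + a) := by field_simp; ring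
  have h2 : 1 - -((s - a) / (s + a)) = 2 * s / (s + a) := by field_simp; ring
  norm_cast
  rw [h1, h2]
  field_simp
  ring

theorem poisson_kernel_fourier (a : ℝ) (ha : 0 < a) (x y : ℝ) :
    (∫ k : ℝ × ℝ, (Real.exp (-(a * Real.sqrt (k.1^2 + k.2^2))) : ℂ) *
        Complex.exp (Complex.I * ((k.1*x + k.2*y : ℝ) : ℂ))) =
      ((2 * Real.pi * a / ((a^2 + x^2 + y^2) ^ ((3:ℝ)/2))) : ℝ) := by
  have hbound : ∀ k : ℝ × ℝ, ‖(rexp (-(a * √(k.1 ^ 2 + k.2 ^ 2))) : ℂ) *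
      cexp (I * ((k.1 * x + k.2 * y : ℝ) : ℂ))‖ ≤ rexp (-a * √(k.1 ^ 2 + k.2 ^ 2)) := fun k => by
    rw [norm_mul, Complex.norm_exp_I_mul_ofReal, Complex.norm_real, norm_of_nonneg (exp_pos _).le,
      mul_one, neg_mul]
  have hpolar : ∀ θ ρ : ℝ, 0 < ρ → ρ • ((rexp (-(a * √((ρ * cos θ) ^ 2 + (ρ * sin θ) ^ 2))) : ℂ) *
      cexp (I * ((ρ * cos θ * x + ρ * sin θ * y : ℝ) : ℂ))) =
      (ρ : ℂ) * cexp (-((a : ℂ) - I * ((x * cos θ + y * sin θ : ℝ) : ℂ)) * ρ) := fun θ ρ hρ => by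
    rw [mul_pow, mul_pow, ← mul_add, cos_sq_add_sin_sq, mul_one, sqrt_sq hρ.le, Complex.real_smul,
      Complex.ofReal_exp, ← Complex.exp_add]
    push_cast
    ring_nf
  rw [integral_eq_intervalIntegral_integral_polar (by fun_prop) (integrableOn_mul_exp_neg_mul ha)
    hbound]
  calc _ = ∫ θ in -π..π, (((a : ℂ) - I * ((x * cos θ + y * sin θ : ℝ) : ℂ)) ^ 2)⁻¹ := by
        refine intervalIntegral.integral_congr fun θ _ => ?_
        rw [← integral_Ioi_mul_cexp_neg_mul (by simpa using ha)]
        exact setIntegral_congr_fun measurableSet_Ioi fun ρ hρ => hpolar θ ρ hρ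
    _ = _ := by
        rw [integral_inv_sq_sub_I_mul_cos_add_sin ha, sqrt_eq_rpow, ← rpow_natCast,
          ← rpow_mul (by positivity)]
        norm_num
end

section
/- For the half-plane convolution u(x,t) = 1/2 + (1/π) arctan(2x/t), thresholding at level 1/2 − σt (for applied stress σ > 0 and small t) moves the front x = 0 to x satisfying (1/π)arctan(2x/t) = −σt, giving front displacement x = −(t/2)tan(πσt) = −(π/2)σt² + O(t⁴), hence average front velocity v = −(π/2)σt + O(t³) over the time step t. -/
/-!
Thresholding `1/2 + arctan(2x/t)/π` at `1/2 - σt` puts the front where `arctan(2x/t) = -πσt`,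
i.e. at `x = -(t/2) tan(πσt)`. Since `0 ≤ tan y - y ≤ y³` on `[0, 1]`, this differs from
`-(π/2)σt²` by at most `(t/2)(πσt)³`, and dividing by `t` gives the velocity.
-/

open Real

namespace Real

/-- From `sin y ≤ y` and `cos y ≥ 1 - y²/2 ≥ 1/2`. -/
lemma tan_sub_self_le_pow_three {y : ℝ} (hy0 : 0 ≤ y) (hy1 : y ≤ 1) : tan y - y ≤ y ^ 3 := by
  have hcos : 0 < cos y := cos_pos_of_mem_Ioo ⟨by linarith [pi_pos], by linarith [pi_gt_three]⟩
  rw [tan_eq_sin_div_cos, div_sub' hcos.ne', div_le_iff₀ hcos]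
  nlinarith [sin_le hy0, one_sub_sq_div_two_le_cos (x := y), cos_le_one y, pow_nonneg hy0 3,
    mul_le_one₀ hy1 hy0 hy1]

lemma abs_tan_sub_self_le_pow_three {y : ℝ} (hy0 : 0 ≤ y) (hy1 : y ≤ 1) :
    |tan y - y| ≤ y ^ 3 := by
  rw [abs_of_nonneg (sub_nonneg.2 (le_tan hy0 (by linarith [pi_gt_three])))]
  exact tan_sub_self_le_pow_three hy0 hy1

lemma arctan_two_mul_neg_half_mul_tan_div {t y : ℝ} (ht : t ≠ 0) (hy₁ : -(π / 2) < y)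
    (hy₂ : y < π / 2) : arctan (2 * (-(t / 2) * tan y) / t) = -y := by
  have : 2 * (-(t / 2) * tan y) / t = tan (-y) := by
    rw [tan_neg]
    field_simp
  rw [this, arctan_tan (by linarith) (by linarith)]

lemma abs_neg_half_mul_tan_add_half_mul_le {t y : ℝ} (ht : 0 ≤ t) (hy0 : 0 ≤ y) (hy1 : y ≤ 1) :
    |-(t / 2) * tan y + t / 2 * y| ≤ t / 2 * y ^ 3 := by
  rw [show -(t / 2) * tan y + t / 2 * y = -(t / 2) * (tan y - y) by ring, abs_mul, abs_neg,
    abs_of_nonneg (by positivity : 0 ≤ t / 2)]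
  exact mul_le_mul_of_nonneg_left (abs_tan_sub_self_le_pow_three hy0 hy1) (by positivity)

end Real

theorem threshold_front_velocity (σ : ℝ) (hσ : 0 < σ) :
    ∃ C > 0, ∃ δ > 0, ∀ t : ℝ, 0 < t → t < δ →
      (1/Real.pi) * Real.arctan (2 * (-(t/2) * Real.tan (Real.pi * σ * t)) / t) = -σ * t ∧
      |(-(t/2) * Real.tan (Real.pi * σ * t)) + (Real.pi/2) * σ * t^2| ≤ C * t^4 ∧
      |(-(t/2) * Real.tan (Real.pi * σ * t)) / t + (Real.pi/2) * σ * t| ≤ C * t^3 := by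
  refine ⟨(π * σ) ^ 3 / 2, by positivity, 1 / (π * σ), by positivity, fun t ht htδ => ?_⟩
  have hy0 : 0 ≤ π * σ * t := by positivity
  have hy1 : π * σ * t ≤ 1 := by
    rw [lt_div_iff₀ (by positivity)] at htδ
    linarith
  have hdisp : |-(t / 2) * tan (π * σ * t) + π / 2 * σ * t ^ 2| ≤ (π * σ) ^ 3 / 2 * t ^ 4 := by
    calc |-(t / 2) * tan (π * σ * t) + π / 2 * σ * t ^ 2|
        = |-(t / 2) * tan (π * σ * t) + t / 2 * (π * σ * t)| := by
          congr 1; ring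
      _ ≤ t / 2 * (π * σ * t) ^ 3 := abs_neg_half_mul_tan_add_half_mul_le ht.le hy0 hy1
      _ = (π * σ) ^ 3 / 2 * t ^ 4 := by ring
  refine ⟨?_, hdisp, ?_⟩
  · rw [arctan_two_mul_neg_half_mul_tan_div ht.ne' (by linarith [pi_gt_three])
      (by linarith [pi_gt_three])]
    field_simp
  · have hvel : -(t / 2) * tan (π * σ * t) / t + π / 2 * σ * t
        = (-(t / 2) * tan (π * σ * t) + π / 2 * σ * t ^ 2) / t := by
      field_simp
    rw [hvel, abs_div, abs_of_pos ht, div_le_iff₀ ht]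
    exact hdisp.trans_eq (by ring)
end

section
/- For the ν=0 kernel, the first moment (1/2π)∬_{ℝ²} (1/(η + c)) K₀(ξ,η,1) dξ dη (principal value) equals (1/2π)·c/((1/2)² + c²); in particular, with c = d/t and after the scaling K(ξ,η,t)dξdη = K(ξ/t,η/t,1)d(ξ/t)d(η/t), one obtains (1/2π)∬_{ℝ²} (1/ρ)K(ξ,η,t)dξdη ≈ (1/2π)·d/((t/2)² + d²) when ρ = η + d. -/
/-!
Integrating out `ξ` turns `K0` into the Cauchy density of scale `1/2`. After the shift
`u = η + c` it becomes the density `f` of location `c`, and the truncated integral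
`∫_{|u|>ε} f u / u` folds into `∫_{u>ε} (f u - f (-u)) / u`, whose integrand is continuous and
integrable on all of `ℝ`. For a Cauchy density of location `x₀` and scale `γ`, partial fractions
give this integrand an explicit primitive (logarithms and arctangents) that vanishes at `0` and
tends to `x₀ / (x₀² + γ²)` at `+∞`, so letting `ε → 0` only evaluates the primitive at `0`.
-/

open MeasureTheory Real Filter Topology

noncomputable def K0 (ξ η : ℝ) : ℝ :=
  (1/(2*Real.pi)) * (1/2) / (((1/2)^2 + ξ^2 + η^2) ^ ((3:ℝ)/2))

open Set ProbabilityTheory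
open scoped NNReal

theorem hasDerivAt_div_mul_sqrt_add_sq {b : ℝ} (hb : 0 < b) (x : ℝ) :
    HasDerivAt (fun x : ℝ => x / (b * √(b + x ^ 2))) ((b + x ^ 2) ^ (3 / 2 : ℝ))⁻¹ x := by
  have hbx : 0 < b + x ^ 2 := by positivity
  have hsq : HasDerivAt (fun x : ℝ => b + x ^ 2) (2 * x) x := by
    simpa using (hasDerivAt_pow 2 x).const_add b
  have hsqrt : HasDerivAt (fun x : ℝ => √(b + x ^ 2)) (x / √(b + x ^ 2)) x :=
    (hsq.sqrt hbx.ne').congr_deriv (by field_simp)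
  refine ((hasDerivAt_id x).div (hsqrt.const_mul b) (by positivity)).congr_deriv ?_
  have hpow : (b + x ^ 2) ^ (3 / 2 : ℝ) = √(b + x ^ 2) ^ 3 := by
    rw [sqrt_eq_rpow, ← rpow_natCast ((b + x ^ 2) ^ (1 / 2 : ℝ)) 3, ← rpow_mul hbx.le]
    norm_num
  rw [hpow, id]
  field_simp
  linear_combination (sq_sqrt hbx.le)

theorem tendsto_div_mul_sqrt_add_sq_atTop {b : ℝ} (hb : 0 < b) :
    Tendsto (fun x : ℝ => x / (b * √(b + x ^ 2))) atTop (𝓝 (1 / b)) := by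
  have hlim : Tendsto (fun x : ℝ => (b * √(b * (x⁻¹) ^ 2 + 1))⁻¹) atTop (𝓝 (1 / b)) := by
    have hcont : ContinuousAt (fun t : ℝ => (b * √(b * t ^ 2 + 1))⁻¹) 0 := by
      fun_prop (disch := positivity)
    simpa [Function.comp_def] using hcont.tendsto.comp tendsto_inv_atTop_zero
  refine hlim.congr' ?_
  filter_upwards [eventually_gt_atTop 0] with x hx
  have hsplit : √(b + x ^ 2) = x * √(b * (x⁻¹) ^ 2 + 1) := by
    rw [← sqrt_sq hx.le, ← sqrt_mul (sq_nonneg x)]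
    congr 1
    field_simp
    exact sq_sqrt (sq_nonneg x)
  rw [hsplit]
  field_simp

theorem integral_inv_add_sq_rpow_three_halves {b : ℝ} (hb : 0 < b) :
    ∫ x : ℝ, ((b + x ^ 2) ^ (3 / 2 : ℝ))⁻¹ = 2 / b := by
  have hhalf := integral_Ioi_of_hasDerivAt_of_nonneg'
    (fun x (_ : x ∈ Ici 0) => hasDerivAt_div_mul_sqrt_add_sq hb x)
    (fun x _ => by positivity) (tendsto_div_mul_sqrt_add_sq_atTop hb)
  have heven := integral_comp_abs (f := fun x : ℝ => ((b + x ^ 2) ^ (3 / 2 : ℝ))⁻¹)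
  simp only [sq_abs] at heven
  rw [heven, hhalf]
  simp
  ring

theorem integrable_inv_add_sq_rpow_three_halves {b : ℝ} (hb : 0 < b) :
    Integrable fun x : ℝ => ((b + x ^ 2) ^ (3 / 2 : ℝ))⁻¹ :=
  Integrable.of_integral_ne_zero (by rw [integral_inv_add_sq_rpow_three_halves hb]; positivity)

theorem K0_eq_mul_inv_rpow (ξ η : ℝ) :
    K0 ξ η = (4 * π)⁻¹ * (((η ^ 2 + (1 / 2) ^ 2) + ξ ^ 2) ^ (3 / 2 : ℝ))⁻¹ := by
  rw [K0, show (1 / 2 : ℝ) ^ 2 + ξ ^ 2 + η ^ 2 = (η ^ 2 + (1 / 2) ^ 2) + ξ ^ 2 by ring]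
  ring

theorem K0_nonneg (ξ η : ℝ) : 0 ≤ K0 ξ η := by
  rw [K0_eq_mul_inv_rpow]
  positivity

theorem continuous_K0 : Continuous fun p : ℝ × ℝ => K0 p.1 p.2 := by
  simp only [K0_eq_mul_inv_rpow]
  fun_prop (disch := first | positivity | (intro p; positivity))

theorem integral_K0_eq_cauchyPDFReal (η : ℝ) : ∫ ξ, K0 ξ η = cauchyPDFReal 0 (1 / 2) η := by
  have hb : 0 < η ^ 2 + (1 / 2 : ℝ) ^ 2 := by positivity
  simp_rw [K0_eq_mul_inv_rpow, integral_const_mul, integral_inv_add_sq_rpow_three_halves hb,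
    cauchyPDFReal_def]
  push_cast
  ring

theorem integrable_K0 : Integrable fun p : ℝ × ℝ => K0 p.1 p.2 := by
  rw [Measure.volume_eq_prod, integrable_prod_iff' continuous_K0.aestronglyMeasurable]
  refine ⟨.of_forall fun η => ?_, ?_⟩
  · simp only [K0_eq_mul_inv_rpow]
    exact (integrable_inv_add_sq_rpow_three_halves (by positivity)).const_mul _
  · simp only [Real.norm_of_nonneg (K0_nonneg _ _), integral_K0_eq_cauchyPDFReal]
    exact integrable_cauchyPDFReal 0

theorem setIntegral_preimage_snd_mul {α β : Type*} [MeasurableSpace α] [MeasurableSpace β]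
    {μ : Measure α} {ν : Measure β} [SFinite μ] [SFinite ν] {K : α × β → ℝ}
    (hK : Integrable K (μ.prod ν)) {T : Set β} (hT : MeasurableSet T) {w : β → ℝ}
    (hw : AEStronglyMeasurable w (ν.restrict T)) {C : ℝ} (hC : ∀ y ∈ T, ‖w y‖ ≤ C) :
    ∫ p in Prod.snd ⁻¹' T, w p.2 * K p ∂μ.prod ν = ∫ y in T, w y * ∫ x, K (x, y) ∂μ ∂ν := by
  rw [← univ_prod, ← Measure.prod_restrict, Measure.restrict_univ]
  have hint : Integrable (fun p : α × β => w p.2 * K p) (μ.prod (ν.restrict T)) :=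
    (hK.mono_measure (Measure.prod_mono le_rfl Measure.restrict_le_self)).bdd_mul hw.comp_snd
      (Measure.quasiMeasurePreserving_snd.ae (ae_restrict_of_forall_mem hT hC))
  rw [integral_prod_symm _ hint]
  simp_rw [integral_const_mul]

theorem setIntegral_lt_abs_div_eq_setIntegral_Ioi {f : ℝ → ℝ} (hf : Integrable f) {ε : ℝ}
    (hε : 0 < ε) :
    ∫ u in {u | ε < |u|}, f u / u = ∫ u in Ioi ε, (f u - f (-u)) / u := by
  have hset : {u : ℝ | ε < |u|} = Iio (-ε) ∪ Ioi ε := by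
    ext u
    simp only [mem_ofPred_eq, mem_union, mem_Iio, mem_Ioi, lt_abs]
    constructor <;> rintro (h | h) <;> first | (left; linarith) | (right; linarith)
  have hdiv : ∀ g : ℝ → ℝ, Integrable g →
      IntegrableOn (fun u => g u / u) (Iio (-ε) ∪ Ioi ε) := by
    intro g hg
    have hs : MeasurableSet {u : ℝ | ε < |u|} := measurableSet_lt measurable_const measurable_abs
    simp only [div_eq_mul_inv, ← hset]
    refine hg.integrableOn.mul_bdd (c := ε⁻¹) (by fun_prop)
      (ae_restrict_of_forall_mem hs fun u (hu : ε < |u|) => ?_)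
    rw [norm_inv, Real.norm_eq_abs]
    exact inv_anti₀ hε hu.le
  have hIoi : ∀ g : ℝ → ℝ, Integrable g → IntegrableOn (fun u => g u / u) (Ioi ε) :=
    fun g hg => (hdiv g hg).mono_set subset_union_right
  have hneg : ∫ u in Iio (-ε), f u / u = -∫ u in Ioi ε, f (-u) / u := by
    rw [← integral_Iic_eq_integral_Iio, ← integral_comp_neg_Ioi, ← integral_neg]
    simp only [div_neg]
  rw [hset, setIntegral_union ((Iio_disjoint_Ici (by linarith)).mono_right Ioi_subset_Ici_self)
      measurableSet_Ioi ((hdiv f hf).mono_set subset_union_left) (hIoi f hf), hneg]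
  simp_rw [sub_div]
  rw [integral_sub (hIoi f hf) (hIoi _ hf.comp_neg)]
  ring

namespace ProbabilityTheory

noncomputable def cauchyPVPrimitive (x₀ : ℝ) (γ : ℝ≥0) (u : ℝ) : ℝ :=
  γ / (2 * π * (x₀ ^ 2 + γ ^ 2)) * (log ((u + x₀) ^ 2 + γ ^ 2) - log ((u - x₀) ^ 2 + γ ^ 2)) +
    x₀ / (π * (x₀ ^ 2 + γ ^ 2)) * (arctan ((u - x₀) / γ) + arctan ((u + x₀) / γ))

variable (x₀ : ℝ) {γ : ℝ≥0}

theorem cauchyPVPrimitive_zero : cauchyPVPrimitive x₀ γ 0 = 0 := by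
  simp [cauchyPVPrimitive, neg_div]

theorem cauchyPDFReal_sub_neg_div (hγ : γ ≠ 0) {u : ℝ} (hu : u ≠ 0) :
    (cauchyPDFReal x₀ γ u - cauchyPDFReal x₀ γ (-u)) / u =
      4 * x₀ / ((u + x₀) ^ 2 + γ ^ 2) * cauchyPDFReal x₀ γ u := by
  simp only [cauchyPDFReal_def, show (-u - x₀) ^ 2 = (u + x₀) ^ 2 by ring]
  field_simp
  ring

theorem hasDerivAt_cauchyPVPrimitive (hγ : γ ≠ 0) (u : ℝ) :
    HasDerivAt (cauchyPVPrimitive x₀ γ)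
      (4 * x₀ / ((u + x₀) ^ 2 + γ ^ 2) * cauchyPDFReal x₀ γ u) u := by
  have hP : 0 < (u - x₀) ^ 2 + (γ : ℝ) ^ 2 := by positivity
  have hQ : 0 < (u + x₀) ^ 2 + (γ : ℝ) ^ 2 := by positivity
  have hsq : ∀ a : ℝ, HasDerivAt (fun u : ℝ => (u + a) ^ 2 + γ ^ 2) (2 * (u + a)) u := fun a => by
    simpa using ((hasDerivAt_id u).add_const a).pow 2 |>.add_const ((γ : ℝ) ^ 2)
  have hlin : ∀ a : ℝ, HasDerivAt (fun u : ℝ => (u + a) / γ) (1 / γ) u := fun a =>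
    ((hasDerivAt_id u).add_const a).div_const _
  have hlogs := ((hsq x₀).log hQ.ne').sub
    ((hsq (-x₀)).log (by simpa [← sub_eq_add_neg] using hP.ne'))
  have harctans := (hlin (-x₀)).arctan.add (hlin x₀).arctan
  have := (hlogs.const_mul (γ / (2 * π * (x₀ ^ 2 + γ ^ 2)))).add
    (harctans.const_mul (x₀ / (π * (x₀ ^ 2 + γ ^ 2))))
  simp only [← sub_eq_add_neg] at this
  refine this.congr_deriv ?_
  rw [cauchyPDFReal_def]
  field_simp
  ring

theorem integrable_div_add_sq_mul_cauchyPDFReal (hγ : γ ≠ 0) :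
    Integrable fun u => 4 * x₀ / ((u + x₀) ^ 2 + γ ^ 2) * cauchyPDFReal x₀ γ u := by
  have hγ' : (0 : ℝ) < γ := by positivity
  have hQ : ∀ u : ℝ, 0 < (u + x₀) ^ 2 + (γ : ℝ) ^ 2 := fun u => by positivity
  refine (integrable_cauchyPDFReal x₀).bdd_mul (c := 4 * |x₀| / γ ^ 2)
    (continuous_const.div (by fun_prop) fun u => (hQ u).ne').aestronglyMeasurable
    (.of_forall fun u => ?_)
  rw [norm_div, norm_mul, Real.norm_eq_abs, Real.norm_eq_abs, Real.norm_eq_abs,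
    abs_of_pos four_pos, abs_of_pos (hQ u)]
  gcongr
  exact le_add_of_nonneg_left (sq_nonneg (u + x₀))

theorem tendsto_log_add_sq_sub_log_sub_sq_atTop {b : ℝ} (hb : 0 < b) :
    Tendsto (fun u : ℝ => log ((u + x₀) ^ 2 + b) - log ((u - x₀) ^ 2 + b)) atTop (𝓝 0) := by
  set φ : ℝ → ℝ := fun t =>
    log ((1 + x₀ * t) ^ 2 + b * t ^ 2) - log ((1 + -x₀ * t) ^ 2 + b * t ^ 2)
  have hφ : ContinuousAt φ 0 := by fun_prop (disch := simp)
  have hlim := hφ.tendsto.comp tendsto_inv_atTop_zero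
  rw [show φ 0 = 0 by simp [φ]] at hlim
  refine hlim.congr' ?_
  filter_upwards [eventually_gt_atTop 0] with u hu
  have hscale : ∀ a : ℝ,
      log ((u + a) ^ 2 + b) = log (u ^ 2) + log ((1 + a * u⁻¹) ^ 2 + b * u⁻¹ ^ 2) := fun a => by
    rw [← log_mul (by positivity) (by positivity)]
    congr 1
    field_simp
  simp only [Function.comp_apply, φ, sub_eq_add_neg u x₀, hscale]
  ring

theorem tendsto_cauchyPVPrimitive_atTop (hγ : γ ≠ 0) :
    Tendsto (cauchyPVPrimitive x₀ γ) atTop (𝓝 (x₀ / (x₀ ^ 2 + γ ^ 2))) := by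
  have hγ' : (0 : ℝ) < γ := by positivity
  have harctan : ∀ a : ℝ, Tendsto (fun u : ℝ => arctan ((u + a) / γ)) atTop (𝓝 (π / 2)) :=
    fun a => (tendsto_arctan_atTop.mono_right nhdsWithin_le_nhds).comp
      ((tendsto_atTop_add_const_right _ a tendsto_id).atTop_div_const hγ')
  have := ((tendsto_log_add_sq_sub_log_sub_sq_atTop x₀ (pow_pos hγ' 2)).const_mul
    (γ / (2 * π * (x₀ ^ 2 + γ ^ 2)))).add
      (((harctan (-x₀)).add (harctan x₀)).const_mul (x₀ / (π * (x₀ ^ 2 + γ ^ 2))))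
  simp only [← sub_eq_add_neg] at this
  rw [show x₀ / (x₀ ^ 2 + γ ^ 2) = γ / (2 * π * (x₀ ^ 2 + γ ^ 2)) * 0 +
      x₀ / (π * (x₀ ^ 2 + γ ^ 2)) * (π / 2 + π / 2) by field_simp; ring]
  exact this

theorem tendsto_setIntegral_cauchyPDFReal_div (hγ : γ ≠ 0) :
    Tendsto (fun ε => ∫ u in {u | ε < |u|}, cauchyPDFReal x₀ γ u / u) (𝓝[>] 0)
      (𝓝 (x₀ / (x₀ ^ 2 + γ ^ 2))) := by
  have hH := hasDerivAt_cauchyPVPrimitive x₀ hγ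
  have hlim : Tendsto (fun ε => x₀ / (x₀ ^ 2 + γ ^ 2) - cauchyPVPrimitive x₀ γ ε) (𝓝[>] 0)
      (𝓝 (x₀ / (x₀ ^ 2 + γ ^ 2) - cauchyPVPrimitive x₀ γ 0)) :=
    (tendsto_const_nhds.sub (hH 0).continuousAt.tendsto).mono_left nhdsWithin_le_nhds
  rw [cauchyPVPrimitive_zero, sub_zero] at hlim
  refine hlim.congr' ?_
  filter_upwards [self_mem_nhdsWithin] with ε (hε : 0 < ε)
  rw [setIntegral_lt_abs_div_eq_setIntegral_Ioi (integrable_cauchyPDFReal x₀) hε,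
    setIntegral_congr_fun measurableSet_Ioi fun u (hu : ε < u) =>
      cauchyPDFReal_sub_neg_div x₀ hγ (hε.trans hu).ne',
    integral_Ioi_of_hasDerivAt_of_tendsto (hH ε).continuousAt.continuousWithinAt (fun u _ => hH u)
      (integrable_div_add_sq_mul_cauchyPDFReal x₀ hγ).integrableOn
      (tendsto_cauchyPVPrimitive_atTop x₀ hγ)]

end ProbabilityTheory

theorem setIntegral_inv_add_mul_K0_eq (c : ℝ) {ε : ℝ} (hε : 0 < ε) :
    ∫ p in {p : ℝ × ℝ | ε < |p.2 + c|}, (1 / (p.2 + c)) * K0 p.1 p.2 =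
      ∫ u in {u | ε < |u|}, cauchyPDFReal c (1 / 2) u / u := by
  have hT : MeasurableSet {η : ℝ | ε < |η + c|} := measurableSet_lt measurable_const (by fun_prop)
  have hbound : ∀ η ∈ {η : ℝ | ε < |η + c|}, ‖1 / (η + c)‖ ≤ ε⁻¹ :=
    fun η (hη : ε < |η + c|) => by
    rw [norm_div, norm_one, Real.norm_eq_abs, one_div]
    exact inv_anti₀ hε hη.le
  calc _ = ∫ η in {η | ε < |η + c|}, 1 / (η + c) * ∫ ξ, K0 ξ η := by
        rw [Measure.volume_eq_prod]
        exact setIntegral_preimage_snd_mul (K := fun p => K0 p.1 p.2)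
          (by rw [← Measure.volume_eq_prod]; exact integrable_K0) hT
          (by fun_prop : Measurable fun η : ℝ => 1 / (η + c)).aestronglyMeasurable hbound
    _ = ∫ η in (· + c) ⁻¹' {u | ε < |u|}, cauchyPDFReal c (1 / 2) (η + c) / (η + c) := by
        simp only [integral_K0_eq_cauchyPDFReal, cauchyPDFReal_def, add_sub_cancel_right, sub_zero,
          one_div_mul_eq_div]
        rfl
    _ = _ := (measurePreserving_add_right volume c).setIntegral_preimage_emb
        (measurableEmbedding_addRight c) (fun u => cauchyPDFReal c (1 / 2) u / u) _

theorem pv_first_moment_nu_zero_general (c : ℝ) :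
    Tendsto (fun ε : ℝ =>
        (1/(2*Real.pi)) * ∫ p in {p : ℝ × ℝ | ε < |p.2 + c|}, (1/(p.2 + c)) * K0 p.1 p.2)
      (nhdsWithin 0 (Set.Ioi 0))
      (nhds ((1/(2*Real.pi)) * (c / ((1/2)^2 + c^2)))) := by
  have hpv := (tendsto_setIntegral_cauchyPDFReal_div c (γ := 1 / 2) (by norm_num)).const_mul
    (1 / (2 * π))
  rw [show ((1 / 2 : ℝ≥0) : ℝ) = 1 / 2 by norm_num, add_comm (c ^ 2)] at hpv
  refine hpv.congr' ?_
  filter_upwards [self_mem_nhdsWithin] with ε (hε : 0 < ε)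
  rw [setIntegral_inv_add_mul_K0_eq c hε]

theorem pv_first_moment_nu_zero (c : ℝ) (hc : c ≠ 0) :
    Tendsto (fun ε : ℝ =>
        (1/(2*Real.pi)) * ∫ p in {p : ℝ × ℝ | ε < |p.2 + c|}, (1/(p.2 + c)) * K0 p.1 p.2)
      (nhdsWithin 0 (Set.Ioi 0))
      (nhds ((1/(2*Real.pi)) * (c / ((1/2)^2 + c^2)))) :=
  pv_first_moment_nu_zero_general c
end
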